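/- (Kleiss–Kuijf) A polynomial w ∈ W(n-1) is a Lie polynomial if and only if for all words a, b (with a possibly empty) it satisfies (w, a1b) = (-1)^{|a|} (w, 1(ā ⧢ b)), where ā is the reversal of a. -/

import Mathlib

open scoped BigOperators

/-- `Wd m` : the algebra of formal ℚ-linear combinations of words in letters `x_1,…,x_m`
(represented as `Fin m`), with concatenation product. -/
abbrev Wd (m : ℕ) := MonoidAlgebra ℚ (FreeMonoid (Fin m))

/-- The word monomial associated to a list of letters. -/
noncomputable def word {m : ℕ} (l : List (Fin m)) : Wd m :=
  MonoidAlgebra.single (FreeMonoid.ofList l) 1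

/-- All interleavings (shuffles) of two lists. -/
def shuffles {α : Type*} : List α → List α → List (List α)
  | [], bs => [bs]
  | a :: as, [] => [a :: as]
  | a :: as, b :: bs =>
      (shuffles as (b :: bs)).map (a :: ·) ++ (shuffles (a :: as) bs).map (b :: ·)

/-- The shuffle product of two words, as an element of `Wd m`. -/
noncomputable def shuffleProd {m : ℕ} (a b : List (Fin m)) : Wd m :=
  ((shuffles a b).map word).sum

/-- Binary trees representing iterated commutators (Lie monomials). -/
inductive LieTree (m : ℕ) where
  | leaf : Fin m → LieTree m
  | node : LieTree m → LieTree m → LieTree m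

/-- Expansion of a Lie monomial in the word algebra, via `[u,v] = uv - vu`. -/
noncomputable def LieTree.expand {m : ℕ} : LieTree m → Wd m
  | .leaf i => word [i]
  | .node u v => u.expand * v.expand - v.expand * u.expand

/-- The list of leaf labels of a Lie tree, read left to right. -/
def LieTree.leaves {m : ℕ} : LieTree m → List (Fin m)
  | .leaf i => [i]
  | .node u v => u.leaves ++ v.leaves

/-- `Lie(m)` : the span of the multilinear Lie monomials (each letter used exactly once). -/
noncomputable def LieSub (m : ℕ) : Submodule ℚ (Wd m) :=
  Submodule.span ℚ
    {x | ∃ T : LieTree m, T.leaves.Perm (List.finRange m) ∧ x = LieTree.expand T}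

/-- `W(m)` : the span of the multilinear words (each letter used exactly once). -/
noncomputable def Wsub (m : ℕ) : Submodule ℚ (Wd m) :=
  Submodule.span ℚ {x | ∃ l : List (Fin m), l.Perm (List.finRange m) ∧ x = word l}

/-- `Sh(m)` : the span of nontrivial shuffles of multilinear words. -/
noncomputable def ShSub (m : ℕ) : Submodule ℚ (Wd m) :=
  Submodule.span ℚ
    {x | ∃ a b : List (Fin m), a ≠ [] ∧ b ≠ [] ∧ (a ++ b).Perm (List.finRange m) ∧
      x = shuffleProd a b}

/-- The left-nested comb `Γ_{1a} = [...[[x_1, a_1], a_2], …]` (the letter `x_1` is `0`). -/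
def comb {m : ℕ} [NeZero m] (a : List (Fin m)) : LieTree m :=
  a.foldl (fun t i => LieTree.node t (LieTree.leaf i)) (LieTree.leaf 0)

/-- The finset of permutations of the letters `x_2,…,x_m` (i.e. of `(finRange m).tail`). -/
noncomputable def permsTail (m : ℕ) : Finset (List (Fin m)) :=
  ((List.finRange m).tail).permutations.toFinset

/-!
The multilinear Lie polynomials in which `x_1` occurs once are spanned by the left-normed combs
`Γ_{1σ} = [...[[x_1, σ_1], σ_2], …, σ_k]`: by the Jacobi identity, the span of the combs is stable
under bracketing with any Lie monomial avoiding `x_1`. Expanding `Γ_{1σ}` one bracket at a time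
(the new letter goes either to the right end of the word or, with a sign, to its left end) shows
that its coefficient on `a1b` is `(-1)^{|a|}` times the number of ways of obtaining `σ` as a shuffle
of `ā` and `b`. Hence every comb satisfies the relations, and so does every Lie polynomial, the
relations being linear. Conversely, the same formula shows that a multilinear `w` satisfying the
relations agrees with `∑_σ (w, 1σ) Γ_{1σ}` on every multilinear word `a1b`, so `w` is this sum.
-/

section ListSums

lemma List.sum_map_count_singleton {α : Type*} [BEq α] (L : List α) (a : α) :
    (L.map fun c => ([c].count a : ℚ)).sum = L.count a := by
  induction L with
  | nil => simp
  | cons c L ih =>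
    rw [List.map_cons, List.sum_cons, ih, List.count_cons (l := L), List.count_singleton]
    push_cast
    ring

lemma List.sum_map_eq_sum_count {ι M : Type*} [BEq ι] [LawfulBEq ι] [AddCommMonoid M]
    (L : List ι) (f : ι → M) {s : Finset ι} (h : ∀ x ∈ L, x ∈ s) :
    (L.map f).sum = ∑ x ∈ s, L.count x • f x := by
  classical
  -- `Finset.sum_list_map_count` counts with the `BEq` instance derived from `DecidableEq`.
  rw [Finset.sum_list_map_count, lawful_beq_subsingleton instBEqOfDecidableEq ‹BEq ι›]
  refine Finset.sum_subset (fun x hx => h x (List.mem_toFinset.1 hx)) fun x _ hx => ?_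
  rw [List.count_eq_zero.2 (by simpa using hx), zero_smul]

end ListSums

section Shuffles

variable {α : Type*}

@[simp] lemma shuffles_nil_left (b : List α) : shuffles [] b = [b] := by
  rw [shuffles]

@[simp] lemma shuffles_nil_right (a : List α) : shuffles a [] = [a] := by
  cases a <;> rw [shuffles]

lemma shuffles_cons_cons (x y : α) (p q : List α) :
    shuffles (x :: p) (y :: q) =
      (shuffles p (y :: q)).map (x :: ·) ++ (shuffles (x :: p) q).map (y :: ·) := by
  rw [shuffles]

lemma perm_of_mem_shuffles : ∀ {p q c : List α}, c ∈ shuffles p q → c.Perm (p ++ q)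
  | [], _, _, h | _ :: _, [], _, h => by simp_all
  | x :: p, y :: q, c, h => by
    rw [shuffles_cons_cons] at h
    rcases List.mem_append.1 h with h | h <;> obtain ⟨d, hd, rfl⟩ := List.mem_map.1 h
    · exact (perm_of_mem_shuffles hd).cons x
    · exact ((perm_of_mem_shuffles hd).cons y).trans List.perm_middle.symm

lemma shuffles_append_singleton_perm : ∀ (p q : List α) (x y : α),
    (shuffles (p ++ [x]) (q ++ [y])).Perm
      ((shuffles p (q ++ [y])).map (· ++ [x]) ++ (shuffles (p ++ [x]) q).map (· ++ [y]))
  | [], [], x, y => by simpa [shuffles_cons_cons] using List.Perm.swap _ _ _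
  | [], z :: q, x, y => by
    have ih := shuffles_append_singleton_perm [] q x y
    simp only [List.nil_append, List.cons_append, shuffles_cons_cons, shuffles_nil_left] at ih ⊢
    refine ((ih.map _).append_left _).trans ?_
    simp [Function.comp_def]
    exact List.Perm.swap _ _ _
  | w :: p, [], x, y => by
    have ih := shuffles_append_singleton_perm p [] x y
    simp only [List.nil_append, List.cons_append, shuffles_cons_cons, shuffles_nil_right] at ih ⊢
    refine ((ih.map _).append_right _).trans ?_
    simpa [Function.comp_def] using (List.Perm.swap _ _ _).append_left _
  | w :: p, z :: q, x, y => by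
    have ih₁ := shuffles_append_singleton_perm p (z :: q) x y
    have ih₂ := shuffles_append_singleton_perm (w :: p) q x y
    simp only [List.cons_append, shuffles_cons_cons] at ih₁ ih₂ ⊢
    refine ((ih₁.map _).append (ih₂.map _)).trans ?_
    simp only [List.map_append, List.map_map, Function.comp_def, List.cons_append,
      List.append_assoc]
    exact (List.perm_append_comm_assoc _ _ _).append_left _
  termination_by p q => p.length + q.length

variable [DecidableEq α]

lemma count_append_singleton_map_append_singleton (L : List (List α)) (σ : List α) (x i : α) :
    (L.map (· ++ [x])).count (σ ++ [i]) = if x = i then L.count σ else 0 := by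
  split_ifs with h
  · subst h
    exact List.count_map_of_injective _ _ (List.append_left_injective _) _
  · refine List.count_eq_zero.2 fun hmem => h ?_
    obtain ⟨τ, -, hτ⟩ := List.mem_map.1 hmem
    simpa using (List.append_inj' hτ rfl).2

lemma count_append_singleton_shuffles (σ u v : List α) (i : α) :
    (shuffles u v).count (σ ++ [i]) =
      (if u.getLast? = some i then (shuffles u.dropLast v).count σ else 0) +
        (if v.getLast? = some i then (shuffles u v.dropLast).count σ else 0) := by
  rcases List.eq_nil_or_concat' u with rfl | ⟨p, x, rfl⟩ <;>
    rcases List.eq_nil_or_concat' v with rfl | ⟨q, y, rfl⟩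
  · simp
  · simp only [shuffles_nil_left, List.count_singleton, beq_iff_eq]
    split_ifs <;> simp_all
  · simp only [shuffles_nil_right, List.count_singleton, beq_iff_eq]
    split_ifs <;> simp_all
  · rw [(shuffles_append_singleton_perm p q x y).count_eq, List.count_append,
      count_append_singleton_map_append_singleton, count_append_singleton_map_append_singleton]
    simp

lemma count_nil_shuffles (u v : List α) :
    (shuffles u v).count [] = if u = [] ∧ v = [] then 1 else 0 := by
  split_ifs with h
  · simp [h.1, h.2]
  · refine List.count_eq_zero.2 fun hmem => h ?_
    simpa using (perm_of_mem_shuffles hmem).symm.eq_nil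

end Shuffles

section Coefficients

open MonoidAlgebra

variable {m : ℕ}

lemma coeff_word (l l' : List (Fin m)) :
    (word l).coeff (FreeMonoid.ofList l') = if l = l' then 1 else 0 := by
  classical
  rw [word, coeff_single, Finsupp.single_apply]
  simp

lemma coeff_mul_word_singleton (f : Wd m) (i : Fin m) (l : List (Fin m)) :
    (f * word [i]).coeff (FreeMonoid.ofList l) =
      if l.getLast? = some i then f.coeff (FreeMonoid.ofList l.dropLast) else 0 := by
  rcases List.eq_nil_or_concat' l with rfl | ⟨l, j, rfl⟩
  · refine coeff_mul_single_of_forall_mul_ne _ _ fun d hd => ?_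
    simpa using congrArg FreeMonoid.length hd
  · split_ifs with h
    · obtain rfl : j = i := by simpa using h
      simp [word]
    · refine coeff_mul_single_of_forall_mul_ne _ _ fun d hd => h ?_
      simpa using congrArg (List.getLast? ∘ FreeMonoid.toList) hd.symm

lemma coeff_word_singleton_mul (f : Wd m) (i : Fin m) (l : List (Fin m)) :
    (word [i] * f).coeff (FreeMonoid.ofList l) =
      if l.head? = some i then f.coeff (FreeMonoid.ofList l.tail) else 0 := by
  rcases l with _ | ⟨j, l⟩
  · refine coeff_single_mul_of_forall_mul_ne _ _ fun d hd => ?_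
    simpa using congrArg FreeMonoid.length hd
  · split_ifs with h
    · obtain rfl : j = i := by simpa using h
      simp [word]
    · refine coeff_single_mul_of_forall_mul_ne _ _ fun d hd => h ?_
      simpa using congrArg (List.head? ∘ FreeMonoid.toList) hd.symm

end Coefficients

section Comb

variable {m : ℕ} [NeZero m]

lemma comb_append_singleton (σ : List (Fin m)) (i : Fin m) :
    comb (σ ++ [i]) = .node (comb σ) (.leaf i) := by
  simp [comb]

lemma leaves_comb (σ : List (Fin m)) : (comb σ).leaves = 0 :: σ := by
  induction σ using List.reverseRecOn with
  | nil => rfl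
  | append_singleton σ i ih => simp [comb_append_singleton, LieTree.leaves, ih]

lemma coeff_expand_comb {σ : List (Fin m)} (hσ : 0 ∉ σ) (a b : List (Fin m)) :
    (comb σ).expand.coeff (FreeMonoid.ofList (a ++ 0 :: b)) =
      (-1) ^ a.length * (shuffles a.reverse b).count σ := by
  induction σ using List.reverseRecOn generalizing a b with
  | nil =>
    rw [comb, List.foldl_nil, LieTree.expand, coeff_word, count_nil_shuffles]
    rcases a with _ | ⟨x, a⟩ <;> rcases b with _ | ⟨y, b⟩ <;> simp
  | append_singleton σ i ih =>
    obtain ⟨hσ, hi⟩ : 0 ∉ σ ∧ i ≠ 0 := by simpa [eq_comm] using hσ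
    have ih_nil (b) := ih hσ [] b
    have ih_cons (x a b) := ih hσ (x :: a) b
    simp only [List.nil_append, List.cons_append, List.length_cons, List.reverse_cons,
      List.length_nil, pow_zero, List.reverse_nil, one_mul] at ih_nil ih_cons
    rw [comb_append_singleton, LieTree.expand, LieTree.expand, MonoidAlgebra.coeff_sub,
      Finsupp.sub_apply, coeff_mul_word_singleton, coeff_word_singleton_mul,
      count_append_singleton_shuffles]
    rcases a with _ | ⟨x, a⟩ <;> rcases List.eq_nil_or_concat' b with rfl | ⟨b, y, rfl⟩ <;>
      simp [ih hσ, ih_nil, ih_cons, hi.symm, -FreeMonoid.ofList_append, -FreeMonoid.ofList_cons,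
        List.getLast?_append, List.getLast?_cons, List.dropLast_cons_of_ne_nil] <;>
      split_ifs <;> ring

end Comb

section KleissKuijf

def kleissKuijf (m : ℕ) [NeZero m] : Submodule ℚ (Wd m) where
  carrier := {w | ∀ a b : List (Fin m),
    w.coeff (FreeMonoid.ofList (a ++ (0 : Fin m) :: b)) =
      (-1 : ℚ) ^ a.length *
        ((shuffles a.reverse b).map (fun c => w.coeff (FreeMonoid.ofList ((0 : Fin m) :: c)))).sum}
  zero_mem' _ _ := by simp
  add_mem' {x y} hx hy a b := by
    simp only [MonoidAlgebra.coeff_add, Finsupp.add_apply, List.sum_map_add, hx a b, hy a b]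
    ring
  smul_mem' q x hx a b := by
    simp only [MonoidAlgebra.coeff_smul, Finsupp.smul_apply, smul_eq_mul, List.sum_map_mul_left,
      hx a b]
    ring

variable {m : ℕ} [NeZero m]

lemma expand_comb_mem_kleissKuijf {σ : List (Fin m)} (hσ : 0 ∉ σ) :
    (comb σ).expand ∈ kleissKuijf m := by
  intro a b
  have h0 (c : List (Fin m)) :
      (comb σ).expand.coeff (FreeMonoid.ofList (0 :: c)) = [c].count σ := by
    simpa using coeff_expand_comb hσ [] c
  simp only [h0, coeff_expand_comb hσ, List.sum_map_count_singleton]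

end KleissKuijf

section CombSpan

noncomputable def combSpan (m : ℕ) [NeZero m] : Submodule ℚ (Wd m) :=
  Submodule.span ℚ {x | ∃ σ : List (Fin m), 0 ∉ σ ∧ x = (comb σ).expand}

variable {m : ℕ} [NeZero m]

lemma combSpan_le_kleissKuijf : combSpan m ≤ kleissKuijf m :=
  Submodule.span_le.2 fun _ ⟨_, hσ, hx⟩ => hx ▸ expand_comb_mem_kleissKuijf hσ

lemma commutator_mem_combSpan {v : LieTree m} (hv : 0 ∉ v.leaves) {x : Wd m}
    (hx : x ∈ combSpan m) : v.expand * x - x * v.expand ∈ combSpan m := by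
  induction v generalizing x with
  | leaf i =>
    have hi : i ≠ 0 := by simpa [LieTree.leaves, eq_comm] using hv
    induction hx using Submodule.span_induction with
    | mem x hx =>
      obtain ⟨σ, hσ, rfl⟩ := hx
      rw [← neg_sub, neg_mem_iff]
      exact Submodule.subset_span ⟨σ ++ [i], by simp [hσ, hi.symm], by
        rw [comb_append_singleton]; rfl⟩
    | zero => simp
    | add x y _ _ hx hy =>
      rw [mul_add, add_mul, add_sub_add_comm]
      exact add_mem hx hy
    | smul q x _ hx =>
      rw [mul_smul_comm, smul_mul_assoc, ← smul_sub]
      exact Submodule.smul_mem _ q hx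
  | node p q ihp ihq =>
    simp only [LieTree.leaves, List.mem_append, not_or] at hv
    have jacobi : (p.expand * q.expand - q.expand * p.expand) * x -
        x * (p.expand * q.expand - q.expand * p.expand) =
        (p.expand * (q.expand * x - x * q.expand) - (q.expand * x - x * q.expand) * p.expand) -
        (q.expand * (p.expand * x - x * p.expand) - (p.expand * x - x * p.expand) * q.expand) := by
      noncomm_ring
    rw [LieTree.expand, jacobi]
    exact sub_mem (ihp hv.1 (ihq hv.2 hx)) (ihq hv.2 (ihp hv.1 hx))

lemma expand_mem_combSpan {T : LieTree m} (hT : T.leaves.count 0 = 1) :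
    T.expand ∈ combSpan m := by
  induction T with
  | leaf i =>
    obtain rfl : i = 0 := by simpa [LieTree.leaves, List.count_singleton] using hT
    exact Submodule.subset_span ⟨[], by simp, rfl⟩
  | node u v ihu ihv =>
    rw [LieTree.leaves, List.count_append, Nat.add_eq_one_iff] at hT
    rw [LieTree.expand]
    rcases hT with ⟨hu, hv⟩ | ⟨hu, hv⟩
    · exact commutator_mem_combSpan (List.count_eq_zero.1 hu) (ihv hv)
    · rw [← neg_sub, neg_mem_iff]
      exact commutator_mem_combSpan (List.count_eq_zero.1 hv) (ihu hu)

end CombSpan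

section Support

open MonoidAlgebra

variable {α k : Type*} [Semiring k]

def anagrams (L : List α) : Set (FreeMonoid α) := {g | g.toList.Perm L}

lemma supported_anagrams_mono {L₁ L₂ : List α} (h : L₁.Perm L₂) :
    supported k k (anagrams L₁) ≤ supported k k (anagrams L₂) :=
  supported_mono fun _ hg => List.Perm.trans hg h

lemma single_mem_supported_anagrams {l L : List α} (h : l.Perm L) (r : k) :
    single (FreeMonoid.ofList l) r ∈ supported k k (anagrams L) :=
  mem_supported'.2 fun _ hg => Finsupp.single_eq_of_ne fun hl => hg (hl ▸ h)

lemma mul_mem_supported_anagrams {L₁ L₂ : List α} {x y : MonoidAlgebra k (FreeMonoid α)}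
    (hx : x ∈ supported k k (anagrams L₁)) (hy : y ∈ supported k k (anagrams L₂)) :
    x * y ∈ supported k k (anagrams (L₁ ++ L₂)) := by
  classical
  intro _ hg
  obtain ⟨g₁, hg₁, g₂, hg₂, rfl⟩ := Finset.mem_mul.1 (support_coeff_mul_subset x y hg)
  exact (hx hg₁).append (hy hg₂)

lemma MonoidAlgebra.eq_of_coeff_eq_on {M : Type*} {s : Set M} {x y : MonoidAlgebra k M}
    (hx : x ∈ supported k k s) (hy : y ∈ supported k k s) (h : ∀ g ∈ s, x.coeff g = y.coeff g) :
    x = y := by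
  ext g
  by_cases hg : g ∈ s
  · exact h g hg
  · rw [mem_supported'.1 hx g hg, mem_supported'.1 hy g hg]

variable {m : ℕ}

lemma expand_mem_supported_anagrams (T : LieTree m) :
    T.expand ∈ supported ℚ ℚ (anagrams T.leaves) := by
  induction T with
  | leaf i => exact single_mem_supported_anagrams (List.Perm.refl _) 1
  | node u v ihu ihv =>
    exact sub_mem (mul_mem_supported_anagrams ihu ihv)
      (supported_anagrams_mono List.perm_append_comm (mul_mem_supported_anagrams ihv ihu))

lemma wsub_le_supported : Wsub m ≤ supported ℚ ℚ (anagrams (List.finRange m)) :=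
  Submodule.span_le.2 fun _ ⟨_, hl, hx⟩ => hx ▸ single_mem_supported_anagrams hl 1

lemma lieSub_le_supported : LieSub m ≤ supported ℚ ℚ (anagrams (List.finRange m)) :=
  Submodule.span_le.2 fun _ ⟨T, hT, hx⟩ =>
    hx ▸ supported_anagrams_mono hT (expand_mem_supported_anagrams T)

end Support

section Multilinear

variable {m : ℕ}

lemma mem_permsTail {σ : List (Fin m)} : σ ∈ permsTail m ↔ σ.Perm (List.finRange m).tail := by
  simp [permsTail]

variable [NeZero m]

lemma finRange_eq_zero_cons_tail :
    List.finRange m = 0 :: (List.finRange m).tail := by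
  obtain ⟨k, rfl⟩ := Nat.exists_eq_succ_of_ne_zero (NeZero.ne m)
  rw [List.finRange_succ, List.tail_cons]

lemma zero_notMem_of_mem_permsTail {σ : List (Fin m)} (hσ : σ ∈ permsTail m) : 0 ∉ σ := by
  have hnodup := List.nodup_finRange m
  rw [finRange_eq_zero_cons_tail] at hnodup
  exact fun h => (List.nodup_cons.1 hnodup).1 ((mem_permsTail.1 hσ).mem_iff.1 h)

lemma leaves_comb_perm_finRange {σ : List (Fin m)} (hσ : σ ∈ permsTail m) :
    (comb σ).leaves.Perm (List.finRange m) := by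
  rw [leaves_comb, finRange_eq_zero_cons_tail]
  exact (mem_permsTail.1 hσ).cons 0

lemma perm_tail_of_perm_finRange {a b : List (Fin m)} (h : (a ++ 0 :: b).Perm (List.finRange m)) :
    (a ++ b).Perm (List.finRange m).tail := by
  rw [finRange_eq_zero_cons_tail] at h
  exact (List.perm_middle.symm.trans h).cons_inv

end Multilinear

variable {m : ℕ} [NeZero m]

lemma lieSub_le_combSpan : LieSub m ≤ combSpan m := by
  refine Submodule.span_le.2 fun _ ⟨T, hT, hx⟩ => hx ▸ expand_mem_combSpan ?_
  rw [hT.count_eq]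
  exact List.count_eq_one_of_mem (List.nodup_finRange m) (List.mem_finRange 0)

lemma mem_lieSub_of_mem_kleissKuijf {w : Wd m} (hw : w ∈ Wsub m) (hkk : w ∈ kleissKuijf m) :
    w ∈ LieSub m := by
  have hz : (∑ σ ∈ permsTail m, w.coeff (FreeMonoid.ofList (0 :: σ)) • (comb σ).expand) ∈
      LieSub m :=
    Submodule.sum_mem _ fun σ hσ => Submodule.smul_mem _ _
      (Submodule.subset_span ⟨comb σ, leaves_comb_perm_finRange hσ, rfl⟩)
  convert hz using 1
  refine MonoidAlgebra.eq_of_coeff_eq_on (wsub_le_supported hw) (lieSub_le_supported hz)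
    fun g hg => ?_
  obtain ⟨a, b, hab⟩ := List.append_of_mem (hg.mem_iff.2 (List.mem_finRange 0))
  have hsh (c) (hc : c ∈ shuffles a.reverse b) : c ∈ permsTail m :=
    mem_permsTail.2 <| (perm_of_mem_shuffles hc).trans <|
      ((List.reverse_perm a).append_right b).trans (perm_tail_of_perm_finRange (hab ▸ hg))
  rw [← FreeMonoid.ofList_toList g, hab, hkk a b, MonoidAlgebra.coeff_sum,
    Finsupp.finsetSum_apply, List.sum_map_eq_sum_count _ _ hsh, Finset.mul_sum]
  refine Finset.sum_congr rfl fun σ hσ => ?_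
  rw [MonoidAlgebra.coeff_smul, Finsupp.smul_apply,
    coeff_expand_comb (zero_notMem_of_mem_permsTail hσ)]
  simp only [nsmul_eq_mul, smul_eq_mul]
  ring

/-- Kleiss–Kuijf: `w ∈ W(n-1)` is a Lie polynomial iff for all words `a`, `b`
(with `a` possibly empty), `(w, a1b) = (-1)^{|a|} (w, 1(ā ⧢ b))`. -/
theorem stmt6 (n : ℕ) [NeZero (n - 1)] (w : Wd (n - 1)) (hw : w ∈ Wsub (n - 1)) :
    w ∈ LieSub (n - 1) ↔
      ∀ a b : List (Fin (n - 1)),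
        w.coeff (FreeMonoid.ofList (a ++ (0 : Fin (n - 1)) :: b)) =
          (-1 : ℚ) ^ a.length *
            ((shuffles a.reverse b).map
              (fun c => w.coeff (FreeMonoid.ofList ((0 : Fin (n - 1)) :: c)))).sum :=
  ⟨fun h => combSpan_le_kleissKuijf (lieSub_le_combSpan h), mem_lieSub_of_mem_kleissKuijf hw⟩
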